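/- If κ is a subtle cardinal, then for any club C ⊆ κ and any sequence ⟨A_α : α ∈ C⟩ with A_α ⊆ α, there exist inaccessible cardinals α < β, both in C, with A_α = A_β ∩ α. -/

import Mathlib

/-!
Subtlety first forces `κ` to be inaccessible: if `κ ≤ 2 ^ μ` for some `μ < κ`, or if `κ` has a
cofinal sequence of length `λ < κ`, then some club of `κ` carries a sequence of subsets of a fixed
ordinal (`μ`, resp. `λ`) which is injective on the club, contradicting subtlety.

Hence the ordinals of uncountable strong limit cardinals form a club in `κ`, and we apply subtlety
on its intersection `D` with `C`, to the sequence that interleaves `A γ` with a description of the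
singularity of `γ`: a marker, `cf γ`, and the graph of a cofinal map `cf γ → γ`. If the codes of
`α < β` in `D` satisfy the subtlety relation, a singular `β` puts its marker below `α`, so `α` is singular as well; but then
`cf β = cf α` and the cofinal map of `β` agrees with that of `α`, so it is bounded by `α < β`.
-/

/-- `C` is a club (closed unbounded set) in the ordinal `o`:
`C ⊆ o`, `C` is closed under limit points `< o`, and `C` is unbounded in `o`. -/
def IsClubIn (o : Ordinal.{0}) (C : Set Ordinal.{0}) : Prop :=
  C ⊆ Set.Iio o ∧
  (∀ δ < o, (∃ β ∈ C, β < δ) → (∀ β < δ, ∃ γ ∈ C, β < γ ∧ γ < δ) → δ ∈ C) ∧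
  (∀ β < o, ∃ γ ∈ C, β < γ)

/-- A cardinal `κ` is subtle if for every club `C ⊆ κ` and every sequence
`⟨A_α : α ∈ C⟩` with `A_α ⊆ α` for all `α ∈ C`, there are `α < β` in `C` with
`A_α = A_β ∩ α`. -/
def Subtle (κ : Cardinal.{0}) : Prop :=
  ∀ C : Set Ordinal, IsClubIn κ.ord C →
    ∀ A : Ordinal → Set Ordinal, (∀ α ∈ C, A α ⊆ Set.Iio α) →
      ∃ α ∈ C, ∃ β ∈ C, α < β ∧ A α = A β ∩ Set.Iio α

/-- An ordinal `α` is (the von Neumann ordinal of) a strongly inaccessible cardinal. -/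
def OrdInaccessible (α : Ordinal.{0}) : Prop :=
  α.card.ord = α ∧ α.card.IsInaccessible

open Cardinal Ordinal Set Order

lemma isClubIn_Ioo {o μ : Ordinal.{0}} (ho : IsSuccLimit o) (hμ : μ < o) :
    IsClubIn o (Ioo μ o) :=
  ⟨fun _ h => h.2, fun _ hδ ⟨_, hβ, hβδ⟩ _ => ⟨hβ.1.trans hβδ, hδ⟩, fun b hb =>
    ⟨succ (max b μ), ⟨(le_max_right b μ).trans_lt (lt_succ _), ho.succ_lt (max_lt hb hμ)⟩,
      (le_max_left b μ).trans_lt (lt_succ _)⟩⟩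

lemma isClubIn_setOf_inter_Ioc_nonempty {o lam : Ordinal.{0}} {S : Set Ordinal.{0}}
    (ho : IsSuccLimit o) (hlam : lam < o) (hS : ∀ b < o, ∃ s ∈ S, b ≤ s ∧ s < o) :
    IsClubIn o {γ | lam < γ ∧ γ < o ∧ ∀ b < γ, (S ∩ Ioc b γ).Nonempty} := by
  refine ⟨fun γ hγ => hγ.2.1, fun δ hδ ⟨β, hβ, hβδ⟩ hlim => ?_, fun b hb => ?_⟩
  · refine ⟨hβ.1.trans hβδ, hδ, fun b hb => ?_⟩
    obtain ⟨γ, hγ, hbγ, hγδ⟩ := hlim b hb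
    obtain ⟨s, hsS, hbs, hsγ⟩ := hγ.2.2 b hbγ
    exact ⟨s, hsS, hbs, hsγ.trans hγδ.le⟩
  · obtain ⟨s, hsS, hbs, hso⟩ := hS _ (ho.succ_lt (max_lt hb hlam))
    have hmax := (lt_succ (max b lam)).trans_le hbs
    exact ⟨s, ⟨(le_max_right _ _).trans_lt hmax, hso, fun b' hb' => ⟨s, hsS, hb', le_rfl⟩⟩,
      (le_max_left _ _).trans_lt hmax⟩

lemma iterate_lt_nfp_of_forall_lt {o a : Ordinal} {F : Ordinal → Ordinal}
    (hF : ∀ γ < o, γ < F γ ∧ F γ < o) (ha : a < o) (n : ℕ) :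
    F^[n] a < o ∧ F^[n] a < nfp F a := by
  have hlt : F^[n] a < o := by
    induction n with
    | zero => exact ha
    | succ n ih => rw [Function.iterate_succ_apply']; exact (hF _ ih).2
  refine ⟨hlt, (hF _ hlt).1.trans_le ?_⟩
  rw [← Function.iterate_succ_apply' F n a]
  exact iterate_le_nfp F a (n + 1)

namespace IsClubIn

variable {o : Ordinal.{0}} {C D : Set Ordinal.{0}}

lemma mem_of_forall_lt {δ b : Ordinal.{0}} (hC : IsClubIn o C) (hδ : δ < o) (hb : b < δ)
    (h : ∀ b' < δ, ∃ γ ∈ C, b' < γ ∧ γ < δ) : δ ∈ C :=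
  hC.2.1 δ hδ ((h b hb).imp fun _ hγ => ⟨hγ.1, hγ.2.2⟩) h

lemma exists_gt_mem_inter (hC : IsClubIn o C) (hD : IsClubIn o D) (ho : ℵ₀ < o.cof)
    {b : Ordinal.{0}} (hb : b < o) : ∃ δ ∈ C ∩ D, b < δ := by
  choose! nextC hnextC using hC.2.2
  choose! nextD hnextD using hD.2.2
  have hnext : ∀ γ < o, nextC γ < o ∧ nextD γ < o := fun γ hγ =>
    ⟨hC.1 (hnextC γ hγ).1, hD.1 (hnextD γ hγ).1⟩
  set F := fun γ => nextD (nextC γ)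
  have hF : ∀ γ < o, γ < F γ ∧ F γ < o := fun γ hγ =>
    ⟨(hnextC γ hγ).2.trans (hnextD _ (hnext γ hγ).1).2, (hnext _ (hnext γ hγ).1).2⟩
  have hiter := iterate_lt_nfp_of_forall_lt hF hb
  have hiter_succ : ∀ n, F^[n + 1] b = nextD (nextC (F^[n] b)) := fun n =>
    Function.iterate_succ_apply' F n b
  have hδ : nfp F b < o := nfp_lt_ord ho (fun γ hγ => (hF γ hγ).2) hb
  have hbδ : b < nfp F b := (hiter 0).2
  refine ⟨nfp F b, ⟨hC.mem_of_forall_lt hδ hbδ fun b' hb' => ?_,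
    hD.mem_of_forall_lt hδ hbδ fun b' hb' => ?_⟩, hbδ⟩ <;>
  obtain ⟨n, hn⟩ := lt_nfp_iff.1 hb' <;>
  have hx := (hiter n).1
  · refine ⟨nextC (F^[n] b), (hnextC _ hx).1, hn.trans (hnextC _ hx).2, ?_⟩
    exact (hnextD _ (hnext _ hx).1).2.trans (hiter_succ n ▸ (hiter (n + 1)).2)
  · refine ⟨F^[n + 1] b, ?_, hn.trans (hiter_succ n ▸ (hF _ hx).1), (hiter (n + 1)).2⟩
    exact hiter_succ n ▸ (hnextD _ (hnext _ hx).1).1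

lemma inter (hC : IsClubIn o C) (hD : IsClubIn o D) (ho : ℵ₀ < o.cof) : IsClubIn o (C ∩ D) := by
  refine ⟨fun γ hγ => hC.1 hγ.1, fun δ hδ ⟨β, hβ, hβδ⟩ hlim => ⟨?_, ?_⟩,
    fun b hb => hC.exists_gt_mem_inter hD ho hb⟩
  · exact hC.2.1 δ hδ ⟨β, hβ.1, hβδ⟩ fun b hb =>
      let ⟨γ, hγ, hbγ, hγδ⟩ := hlim b hb; ⟨γ, hγ.1, hbγ, hγδ⟩
  · exact hD.2.1 δ hδ ⟨β, hβ.2, hβδ⟩ fun b hb =>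
      let ⟨γ, hγ, hbγ, hγδ⟩ := hlim b hb; ⟨γ, hγ.2, hbγ, hγδ⟩

end IsClubIn

/-- Closure under `b ↦ 2 ^ |b|` characterises the ordinals of strong limit cardinals; asking
`ω < δ` makes the cardinal uncountable. -/
def IsStrongLimitOrd (δ : Ordinal) : Prop :=
  ω < δ ∧ ∀ b < δ, ((2 : Cardinal) ^ b.card).ord < δ

namespace IsStrongLimitOrd

variable {δ : Ordinal}

lemma isInitial (hδ : IsStrongLimitOrd δ) : δ.IsInitial := by
  refine le_antisymm (ord_card_le δ) (not_lt.1 fun h => (cantor δ.card).not_ge ?_)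
  simpa only [card_ord] using card_le_card (hδ.2 _ h).le

lemma aleph0_lt_card (hδ : IsStrongLimitOrd δ) : ℵ₀ < δ.card := by
  have h := card_le_card (hδ.2 ω hδ.1).le
  rw [card_ord, card_omega0] at h
  exact (cantor ℵ₀).trans_le h

lemma isStrongLimit_card (hδ : IsStrongLimitOrd δ) : δ.card.IsStrongLimit := by
  refine ⟨(aleph0_pos.trans hδ.aleph0_lt_card).ne', fun x hx => ?_⟩
  have hxδ : x.ord < δ := by rwa [← hδ.isInitial.ord_card, ord_lt_ord]
  simpa only [card_ord] using hδ.isInitial.card_lt_card.2 (hδ.2 _ hxδ)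

lemma mul_add_lt (hδ : IsStrongLimitOrd δ) {x y z : Ordinal} (hx : x < δ) (hy : y < δ)
    (hz : z < δ) : x * y + z < δ :=
  hδ.isInitial.isPrincipal_add hδ.1.le (hδ.isInitial.isPrincipal_mul hδ.1.le hx hy) hz

lemma natCast_lt (hδ : IsStrongLimitOrd δ) (n : ℕ) : (n : Ordinal) < δ :=
  (natCast_lt_omega0 n).trans hδ.1

end IsStrongLimitOrd

lemma IsStrongLimitOrd.ordInaccessible {δ : Ordinal.{0}} (hδ : IsStrongLimitOrd δ)
    (hreg : δ.cof.ord = δ) : OrdInaccessible δ := by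
  refine ⟨hδ.isInitial, hδ.aleph0_lt_card, ?_, hδ.isStrongLimit_card.isStrongPrelimit⟩
  rw [hδ.isInitial.ord_card]
  conv_lhs => rw [← hreg, card_ord]

lemma isClubIn_Iio_inter_isStrongLimitOrd {κ : Cardinal.{0}} (hκ : κ.IsStrongLimit)
    (hcof : ℵ₀ < κ.ord.cof) : IsClubIn κ.ord (Iio κ.ord ∩ {δ | IsStrongLimitOrd δ}) := by
  refine ⟨inter_subset_left, fun δ hδ ⟨β, hβ, hβδ⟩ hlim => ⟨hδ, hβ.2.1.trans hβδ, fun b hb => ?_⟩,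
    fun b hb => ?_⟩
  · obtain ⟨γ, hγ, hbγ, hγδ⟩ := hlim b hb
    exact (hγ.2.2 b hbγ).trans hγδ
  set g : Ordinal.{0} → Ordinal.{0} := fun γ => ((2 : Cardinal) ^ γ.card).ord
  have hg_mono : Monotone g := fun _ _ h =>
    ord_le_ord.2 (power_le_power_left two_ne_zero (card_le_card h))
  have hg : ∀ γ < κ.ord, γ < g γ ∧ g γ < κ.ord := fun γ hγ =>
    ⟨lt_ord.2 (cantor _), ord_lt_ord.2 (hκ.isStrongPrelimit (lt_ord.1 hγ))⟩
  have hω : ω < κ.ord := omega0_lt_ord.2 (hcof.trans_le (cof_ord_le κ))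
  have hiter := iterate_lt_nfp_of_forall_lt hg (max_lt hb hω)
  refine ⟨nfp g (max b ω), ⟨nfp_lt_ord hcof (fun γ hγ => (hg γ hγ).2) (max_lt hb hω),
    (le_max_right b ω).trans_lt (hiter 0).2, fun b' hb' => ?_⟩,
    (le_max_left b ω).trans_lt (hiter 0).2⟩
  obtain ⟨n, hn⟩ := lt_nfp_iff.1 hb'
  calc g b' ≤ g (g^[n] (max b ω)) := hg_mono hn.le
    _ = g^[n + 1] (max b ω) := (Function.iterate_succ_apply' g n _).symm
    _ < nfp g (max b ω) := (hiter (n + 1)).2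

namespace Subtle

variable {κ : Cardinal.{0}}

theorem exists_lt_eq_of_subset_Iio (h : Subtle κ) {C : Set Ordinal.{0}} (hC : IsClubIn κ.ord C)
    {μ : Ordinal.{0}} (hμ : ∀ γ ∈ C, μ ≤ γ) {A : Ordinal.{0} → Set Ordinal.{0}}
    (hA : ∀ γ ∈ C, A γ ⊆ Iio μ) : ∃ α ∈ C, ∃ β ∈ C, α < β ∧ A α = A β := by
  obtain ⟨α, hα, β, hβ, hαβ, hAαβ⟩ :=
    h C hC A fun γ hγ => (hA γ hγ).trans (Iio_subset_Iio (hμ γ hγ))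
  refine ⟨α, hα, β, hβ, hαβ, ?_⟩
  rw [hAαβ, inter_eq_left.2 ((hA β hβ).trans (Iio_subset_Iio (hμ α hα)))]

theorem isStrongLimit (hκ : ℵ₀ < κ) (h : Subtle κ) : κ.IsStrongLimit := by
  refine ⟨(aleph0_pos.trans hκ).ne', fun μ hμ => not_le.1 fun hle => ?_⟩
  have hmk : #(Iio κ.ord) ≤ #(Set (Iio μ.ord)) := by
    rw [Cardinal.mk_Iio_ordinal, mk_set, Cardinal.mk_Iio_ordinal, card_ord, card_ord,
      ← lift_two.{1, 0}, ← lift_power]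
    exact lift_le.2 hle
  obtain ⟨F⟩ := hmk
  let A : Ordinal.{0} → Set Ordinal.{0} := fun γ =>
    if hγ : γ < κ.ord then Subtype.val '' F ⟨γ, hγ⟩ else ∅
  obtain ⟨α, hα, β, hβ, hαβ, hAαβ⟩ :=
    h.exists_lt_eq_of_subset_Iio (isClubIn_Ioo (isSuccLimit_ord hκ.le) (ord_lt_ord.2 hμ))
      (fun γ hγ => hγ.1.le) (A := A) fun γ hγ => by
        simp only [A, dif_pos hγ.2, image_subset_iff]
        exact fun ξ _ => ξ.2
  simp only [A, dif_pos hα.2, dif_pos hβ.2] at hAαβ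
  exact hαβ.ne (congrArg Subtype.val (F.injective (image_injective.2 Subtype.val_injective hAαβ)))

theorem isRegular (hκ : ℵ₀ < κ) (h : Subtle κ) : κ.IsRegular := by
  refine ⟨hκ.le, not_lt.1 fun hcof => ?_⟩
  obtain ⟨f, hf⟩ := exists_isFundamentalSeq (o := κ.ord) rfl
  have hS : ∀ b < κ.ord, ∃ s ∈ range fun ξ => (f ξ : Ordinal.{0}), b ≤ s ∧ s < κ.ord :=
    fun b hb => by
      obtain ⟨_, ⟨ξ, rfl⟩, hξ⟩ := hf.isCofinal_range ⟨b, hb⟩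
      exact ⟨f ξ, ⟨ξ, rfl⟩, hξ, (f ξ).2⟩
  -- every point of the club is approached from below by values of `f`, so `A` is injective on it
  let A : Ordinal.{0} → Set Ordinal.{0} := fun γ => Subtype.val '' {ξ | (f ξ : Ordinal) ≤ γ}
  obtain ⟨α, hα, β, hβ, hαβ, hAαβ⟩ := h.exists_lt_eq_of_subset_Iio
    (isClubIn_setOf_inter_Ioc_nonempty (isSuccLimit_ord hκ.le) (ord_lt_ord.2 hcof) hS)
    (fun γ hγ => hγ.1.le) (A := A) fun γ _ => by rintro _ ⟨ξ, -, rfl⟩; exact ξ.2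
  obtain ⟨_, ⟨ξ, rfl⟩, hαξ, hξβ⟩ := hβ.2.2 α hαβ
  obtain ⟨η, hηα, hηξ⟩ : (ξ : Ordinal) ∈ A α := hAαβ ▸ ⟨ξ, hξβ, rfl⟩
  rw [Subtype.val_injective hηξ] at hηα
  exact hαξ.not_ge hηα

theorem isInaccessible (hκ : ℵ₀ < κ) (h : Subtle κ) : κ.IsInaccessible :=
  isInaccessible_def.2 ⟨hκ, h.isRegular hκ, h.isStrongLimit hκ⟩

end Subtle

lemma mul_add_eq_mul_add_iff {b x y ξ η : Ordinal} (hξ : ξ < b) (hη : η < b) :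
    b * x + ξ = b * y + η ↔ x = y ∧ ξ = η := by
  refine ⟨fun h => ?_, fun ⟨hxy, hξη⟩ => hxy ▸ hξη ▸ rfl⟩
  have hb : b ≠ 0 := (zero_le.trans_lt hξ).ne'
  have hxy : x = y := by
    simpa only [mul_add_div _ hb, div_eq_zero_of_lt hξ, div_eq_zero_of_lt hη, add_zero] using
      congrArg (· / b) h
  exact ⟨hxy, add_left_cancel (hxy ▸ h)⟩

def tag (i : Fin 4) (x : Ordinal) : Ordinal := 4 * x + (i : ℕ)

lemma tag_eq_tag_iff {i j : Fin 4} {x y : Ordinal} : tag i x = tag j y ↔ i = j ∧ x = y := by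
  have hlt : ∀ i : Fin 4, ((i : ℕ) : Ordinal) < 4 := fun i => by exact_mod_cast i.2
  rw [tag, tag, mul_add_eq_mul_add_iff (hlt i) (hlt j), Nat.cast_inj, Fin.val_inj, and_comm]

lemma IsStrongLimitOrd.tag_lt_iff {δ : Ordinal} (hδ : IsStrongLimitOrd δ) {i : Fin 4}
    {x : Ordinal} : tag i x < δ ↔ x < δ := by
  refine ⟨fun h => (le_mul_right x (by norm_num)).trans_lt (le_self_add.trans_lt h), fun h => ?_⟩
  simpa [tag] using hδ.mul_add_lt (hδ.natCast_lt 4) h (hδ.natCast_lt i)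

def interleave (S : Fin 4 → Set Ordinal) : Set Ordinal :=
  ⋃ i, tag i '' S i

lemma tag_mem_interleave {S : Fin 4 → Set Ordinal} {i : Fin 4} {x : Ordinal} :
    tag i x ∈ interleave S ↔ x ∈ S i := by
  simp [interleave, tag_eq_tag_iff]

lemma interleave_injective : Function.Injective interleave := fun S T h =>
  funext fun i => Set.ext fun x => by rw [← tag_mem_interleave, h, tag_mem_interleave]

lemma interleave_inter_Iio {δ : Ordinal} (hδ : IsStrongLimitOrd δ) (S : Fin 4 → Set Ordinal) :
    interleave S ∩ Iio δ = interleave fun i => S i ∩ Iio δ := by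
  ext z
  simp only [interleave, mem_inter_iff, mem_iUnion, mem_image, mem_Iio]
  constructor
  · rintro ⟨⟨i, x, hx, rfl⟩, hz⟩
    exact ⟨i, x, ⟨hx, hδ.tag_lt_iff.1 hz⟩, rfl⟩
  · rintro ⟨i, x, ⟨hx, hxδ⟩, rfl⟩
    exact ⟨⟨i, x, hx, rfl⟩, hδ.tag_lt_iff.2 hxδ⟩

lemma interleave_subset_Iio {δ : Ordinal} (hδ : IsStrongLimitOrd δ) {S : Fin 4 → Set Ordinal}
    (hS : ∀ i, S i ⊆ Iio δ) : interleave S ⊆ Iio δ := by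
  simp only [interleave, iUnion_subset_iff, image_subset_iff]
  exact fun i x hx => hδ.tag_lt_iff.2 (hS i hx)

noncomputable def fundSeq (γ : Ordinal) : Iio γ.cof.ord → Iio γ :=
  (exists_isFundamentalSeq rfl).choose

lemma isFundamentalSeq_fundSeq (γ : Ordinal) : IsFundamentalSeq (fundSeq γ) :=
  (exists_isFundamentalSeq rfl).choose_spec

/-- Part `0` carries `A γ`; when `γ` is singular, parts `1`, `2`, `3` carry a marker, `cf γ`, and
the graph of `fundSeq γ`, the pair `(ξ, f ξ)` being coded as `cf γ * f ξ + ξ`. -/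
noncomputable def codeParts (A : Ordinal → Set Ordinal) (γ : Ordinal) : Fin 4 → Set Ordinal :=
  ![A γ, {x | γ.cof.ord < γ ∧ x = 0}, {x | γ.cof.ord < γ ∧ x = γ.cof.ord},
    {x | γ.cof.ord < γ ∧ ∃ ξ, x = γ.cof.ord * fundSeq γ ξ + ξ}]

lemma codeParts_subset_Iio {A : Ordinal → Set Ordinal} {γ : Ordinal} (hγ : IsStrongLimitOrd γ)
    (hA : A γ ⊆ Iio γ) (i : Fin 4) : codeParts A γ i ⊆ Iio γ := by
  fin_cases i
  · exact hA
  · rintro _ ⟨-, rfl⟩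
    exact hγ.natCast_lt 0
  · rintro _ ⟨hsing, rfl⟩
    exact hsing
  · rintro _ ⟨hsing, ξ, rfl⟩
    exact hγ.mul_add_lt hsing (fundSeq γ ξ).2 (ξ.2.trans hsing)

theorem cof_ord_eq_of_codeParts_eq {A : Ordinal → Set Ordinal} {α β : Ordinal} (hαβ : α < β)
    (hα : 0 < α) (h : ∀ i, codeParts A α i = codeParts A β i ∩ Iio α) :
    α.cof.ord = α ∧ β.cof.ord = β := by
  have hαreg : ¬ α.cof.ord < α := fun hsing => by
    have hcof : α.cof.ord = β.cof.ord := ((h 2).subset ⟨hsing, rfl⟩).1.2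
    have hbound : ∀ η, (fundSeq β η : Ordinal) < α := by
      intro η
      obtain ⟨-, η', hη'⟩ := ((h 3).subset (⟨hsing, ⟨η, η.2.trans_eq hcof.symm⟩, rfl⟩ :
        _ ∈ codeParts A α 3)).1
      obtain ⟨hval, hidx⟩ := (mul_add_eq_mul_add_iff η.2 η'.2).1
        ((congrArg (· * _ + _) hcof.symm).trans hη')
      rw [Subtype.ext hidx, ← hval]
      exact (fundSeq α _).2
    obtain ⟨_, ⟨η, rfl⟩, hη⟩ := (isFundamentalSeq_fundSeq β).isCofinal_range ⟨α, hαβ⟩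
    exact (hbound η).not_ge hη
  have hβreg : ¬ β.cof.ord < β := fun hsing =>
    hαreg ((h 1).symm.subset ⟨⟨hsing, rfl⟩, hα⟩).1
  exact ⟨(ord_cof_le α).antisymm (not_lt.1 hαreg), (ord_cof_le β).antisymm (not_lt.1 hβreg)⟩

/-- If `κ` is subtle, then for any club `C ⊆ κ` and any sequence `⟨A_α : α ∈ C⟩`
with `A_α ⊆ α`, there are inaccessible `α < β`, both in `C`, with `A_α = A_β ∩ α`. -/
theorem stmt3 (κ : Cardinal.{0}) (hκ : Cardinal.aleph0 < κ) (h : Subtle κ) :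
    ∀ C : Set Ordinal, IsClubIn κ.ord C →
      ∀ A : Ordinal → Set Ordinal, (∀ α ∈ C, A α ⊆ Set.Iio α) →
        ∃ α ∈ C, ∃ β ∈ C, α < β ∧ OrdInaccessible α ∧ OrdInaccessible β ∧
          A α = A β ∩ Set.Iio α := by
  intro C hC A hA
  have hκi := h.isInaccessible hκ
  have hcof : ℵ₀ < κ.ord.cof := by rwa [hκi.isRegular.cof_ord]
  set D := C ∩ (Iio κ.ord ∩ {δ | IsStrongLimitOrd δ})
  have hD : IsClubIn κ.ord D :=
    hC.inter (isClubIn_Iio_inter_isStrongLimitOrd hκi.isStrongLimit hcof) hcof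
  obtain ⟨α, hα, β, hβ, hαβ, hcode⟩ := h D hD (fun γ => interleave (codeParts A γ))
    fun γ hγ => interleave_subset_Iio hγ.2.2 (codeParts_subset_Iio hγ.2.2 (hA γ hγ.1))
  have hparts : ∀ i, codeParts A α i = codeParts A β i ∩ Iio α :=
    congrFun (interleave_injective (hcode.trans (interleave_inter_Iio hα.2.2 _)))
  obtain ⟨hαreg, hβreg⟩ := cof_ord_eq_of_codeParts_eq hαβ (omega0_pos.trans hα.2.2.1) hparts
  exact ⟨α, hα.1, β, hβ.1, hαβ, hα.2.2.ordInaccessible hαreg, hβ.2.2.ordInaccessible hβreg,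
    hparts 0⟩
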